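/- arXiv:1208.4001 — 2 statements merged into one kernel-verified Lean document; each statement's English description precedes it below -/
import Mathlib

section
/- Let t₀ ∈ ℝ, k > 0, and β₁, β₂ ≥ 1 with β₁β₂ > 1. Let f₁, f₂ : [t₀,∞) → [0,∞) be continuous, and define F(t) = ( f₁(t)^{1/(β₁+1)} f₂(t)^{1/(β₂+1)} )^{(β₁+1)(β₂+1)/(β₁+β₂+2)}. Suppose ∫_{t₀}^{∞} F(s) ds = ∞. Then there do not exist continuous functions v₁, v₂ : [t₀,∞) → ℝ satisfying v₁(t) ≥ k + k ∫_{t₀}^{t} f₁(s) v₂(s)^{β₁} ds and v₂(t) ≥ k + k ∫_{t₀}^{t} f₂(s) v₁(s)^{β₂} ds for all t ≥ t₀; that is, any pair of continuous functions satisfying these integral inequalities must blow up in finite time. -/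
/-!
Positivity propagates along `[t₀, ∞)`: at the first time where `min v₁ v₂` would vanish, both
integrals are still nonnegative, so `v₁, v₂ ≥ k > 0` there. Hence the right-hand sides `w₁, w₂`
are `≥ k` and lie below `v₁, v₂`, and `u = w₁ w₂` satisfies
`u' = k f₁ v₂^β₁ w₂ + k f₂ v₁^β₂ w₁ ≥ k (f₁ w₂^(β₁+1) + f₂ w₁^(β₂+1)) ≥ k F u^γ`
with `γ = (β₁+1)(β₂+1)/(β₁+β₂+2) > 1`, the last step by weighted AM–GM. So
`u^(1-γ) + (γ-1) k ∫_{t₀}^t F` is nonincreasing and `∫_{t₀}^∞ F ≤ (k²)^(1-γ) / ((γ-1) k) < ∞`.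
-/

open MeasureTheory Set Filter

theorem forall_pos_of_forall_Ico_pos {g : ℝ → ℝ} {a : ℝ} (hg : ContinuousOn g (Ici a))
    (h : ∀ t ≥ a, (∀ s ∈ Ico a t, 0 < g s) → 0 < g t) : ∀ t ≥ a, 0 < g t := by
  intro t ht
  by_contra! hgt
  set B := Icc a t ∩ g ⁻¹' Iic 0
  have hB : IsCompact B := isCompact_Icc.of_isClosed_subset
    ((hg.mono Icc_subset_Ici_self).preimage_isClosed_of_isClosed isClosed_Icc isClosed_Iic)
    inter_subset_left
  obtain ⟨τ, ⟨hτ, hgτ⟩, hτmin⟩ := hB.exists_isLeast ⟨t, ⟨ht, le_rfl⟩, hgt⟩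
  refine (h τ hτ.1 fun s hs => ?_).not_ge hgτ
  by_contra! hgs
  exact (hτmin ⟨⟨hs.1, hs.2.le.trans hτ.2⟩, hgs⟩).not_gt hs.2

theorem intervalIntegral.integral_nonneg_of_forall_Ico {f : ℝ → ℝ} {a b : ℝ} (hab : a ≤ b)
    (hf : ∀ x ∈ Ico a b, 0 ≤ f x) : 0 ≤ ∫ x in a..b, f x := by
  rw [intervalIntegral.integral_of_le hab, integral_Ioc_eq_integral_Ioo]
  exact setIntegral_nonneg measurableSet_Ioo fun x hx => hf x (Ioo_subset_Ico_self hx)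

theorem lintegral_ofReal_Ici_ne_top_of_intervalIntegral_le {F : ℝ → ℝ} {a M : ℝ}
    (hF : ContinuousOn F (Ici a)) (hF0 : ∀ t ≥ a, 0 ≤ F t) (hM : ∀ T ≥ a, ∫ t in a..T, F t ≤ M) :
    ∫⁻ t in Ici a, ENNReal.ofReal (F t) ≠ ⊤ := by
  have hint : IntegrableOn F (Ioi a) := by
    refine integrableOn_Ioi_of_intervalIntegral_norm_bounded M a
      (fun T => (hF.mono Icc_subset_Ici_self).integrableOn_Icc.mono_set Ioc_subset_Icc_self)
      tendsto_id (eventually_ge_atTop a |>.mono fun T hT => ?_)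
    rw [intervalIntegral.integral_congr (g := F) fun t ht => ?_]
    · exact hM T hT
    · rw [id, uIcc_of_le hT] at ht
      exact Real.norm_of_nonneg (hF0 t ht.1)
  rw [lintegral_ofReal_ne_top_iff_integrable
    (hF.aestronglyMeasurable measurableSet_Ici)
    ((ae_restrict_iff' measurableSet_Ici).2 (Eventually.of_forall hF0))]
  exact (integrableOn_Ici_iff_integrableOn_Ioi).2 hint

theorem rpow_mul_rpow_mul_le_add {p q x y a b : ℝ} (hp : 0 < p) (hq : 0 < q) (hx : 0 ≤ x)
    (hy : 0 ≤ y) (ha : 0 ≤ a) (hb : 0 ≤ b) :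
    (x ^ (1 / p) * y ^ (1 / q)) ^ (p * q / (p + q)) * (a * b) ^ (p * q / (p + q)) ≤
      x * b ^ p + y * a ^ q := by
  have hpq : 0 < p + q := add_pos hp hq
  set θ := q / (p + q) with hθdef
  have hθ : 1 - θ = p / (p + q) := by rw [hθdef]; field_simp; ring
  have hX : 0 ≤ x * b ^ p := mul_nonneg hx (Real.rpow_nonneg hb p)
  have hY : 0 ≤ y * a ^ q := mul_nonneg hy (Real.rpow_nonneg ha q)
  have hgeom : (x * b ^ p) ^ θ * (y * a ^ q) ^ (1 - θ) =
      (x ^ (1 / p) * y ^ (1 / q)) ^ (p * q / (p + q)) * (a * b) ^ (p * q / (p + q)) := by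
    rw [hθ, Real.mul_rpow hx (Real.rpow_nonneg hb p), Real.mul_rpow hy (Real.rpow_nonneg ha q),
      Real.mul_rpow (Real.rpow_nonneg hx _) (Real.rpow_nonneg hy _), Real.mul_rpow ha hb,
      ← Real.rpow_mul hb, ← Real.rpow_mul ha, ← Real.rpow_mul hx, ← Real.rpow_mul hy]
    have e1 : 1 / p * (p * q / (p + q)) = θ := by rw [hθdef]; field_simp
    have e2 : 1 / q * (p * q / (p + q)) = p / (p + q) := by field_simp
    have e3 : p * θ = p * q / (p + q) := by rw [hθdef]; ring
    have e4 : q * (p / (p + q)) = p * q / (p + q) := by ring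
    rw [e1, e2, e3, e4]
    ring
  calc _ = (x * b ^ p) ^ θ * (y * a ^ q) ^ (1 - θ) := hgeom.symm
    _ ≤ θ * (x * b ^ p) + (1 - θ) * (y * a ^ q) :=
      Real.geom_mean_le_arith_mean2_weighted (by positivity) (by rw [hθ]; positivity) hX hY
        (by ring)
    _ ≤ x * b ^ p + y * a ^ q := by
      have : θ ≤ 1 := (div_le_one hpq).2 (by linarith)
      nlinarith [mul_nonneg (sub_nonneg.2 this) hX, mul_nonneg (show 0 ≤ θ by positivity) hY]

theorem integral_le_of_mul_rpow_le_deriv {u u' F : ℝ → ℝ} {a b γ : ℝ} (hab : a ≤ b)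
    (hγ : 1 < γ) (hu : ContinuousOn u (Icc a b)) (hu0 : ∀ t ∈ Icc a b, 0 < u t)
    (hu' : ∀ t ∈ Ioo a b, HasDerivAt u (u' t) t) (hF : IntegrableOn F (Icc a b))
    (hle : ∀ t ∈ Ioo a b, F t * u t ^ γ ≤ u' t) :
    (γ - 1) * ∫ t in a..b, F t ≤ u a ^ (1 - γ) := by
  have hderiv : ∀ t ∈ Ioo a b,
      HasDerivAt (fun t => -u t ^ (1 - γ)) (-(u' t * (1 - γ) * u t ^ (1 - γ - 1))) t :=
    fun t ht => ((hu' t ht).rpow_const (Or.inl (hu0 t (Ioo_subset_Icc_self ht)).ne')).neg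
  have hφ : ∀ t ∈ Ioo a b, (γ - 1) * F t ≤ -(u' t * (1 - γ) * u t ^ (1 - γ - 1)) := by
    intro t ht
    have hut := hu0 t (Ioo_subset_Icc_self ht)
    rw [show 1 - γ - 1 = -γ by ring, Real.rpow_neg hut.le,
      show -(u' t * (1 - γ) * (u t ^ γ)⁻¹) = (γ - 1) * (u' t / u t ^ γ) by ring]
    exact mul_le_mul_of_nonneg_left ((le_div_iff₀ (Real.rpow_pos_of_pos hut γ)).2 (hle t ht))
      (by linarith)
  have hmain := intervalIntegral.integral_le_sub_of_hasDeriv_right_of_le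
    (g := fun t => -u t ^ (1 - γ)) hab
    (hu.rpow_const fun t ht => Or.inl (hu0 t ht).ne').neg
    (fun t ht => (hderiv t ht).hasDerivWithinAt) (hF.const_mul (γ - 1)) hφ
  rw [intervalIntegral.integral_const_mul] at hmain
  linarith [Real.rpow_nonneg (hu0 b (right_mem_Icc.2 hab)).le (1 - γ)]

theorem mul_rpow_add_one_le {x w v β : ℝ} (hx : 0 ≤ x) (hw : 0 ≤ w) (hwv : w ≤ v)
    (hβ : 0 ≤ β) : x * w ^ (β + 1) ≤ x * v ^ β * w := by
  rw [Real.rpow_add_one' hw (by linarith), ← mul_assoc]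
  exact mul_le_mul_of_nonneg_right
    (mul_le_mul_of_nonneg_left (Real.rpow_le_rpow hw hwv hβ) hx) hw

noncomputable def integralRhs (t₀ k β : ℝ) (f v : ℝ → ℝ) (t : ℝ) : ℝ :=
  k + k * ∫ s in t₀..t, f s * v s ^ β

section integralRhs

variable {t₀ k β t : ℝ} {f v : ℝ → ℝ}

@[simp]
theorem integralRhs_self : integralRhs t₀ k β f v t₀ = k := by
  simp [integralRhs]

theorem le_integralRhs (hk : 0 ≤ k) (ht : t₀ ≤ t) (h : ∀ s ∈ Ico t₀ t, 0 ≤ f s * v s ^ β) :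
    k ≤ integralRhs t₀ k β f v t :=
  le_add_of_nonneg_right (mul_nonneg hk (intervalIntegral.integral_nonneg_of_forall_Ico ht h))

theorem continuousOn_integralRhs (hg : ContinuousOn (fun s => f s * v s ^ β) (Ici t₀))
    (ht : t₀ ≤ t) : ContinuousOn (integralRhs t₀ k β f v) (Icc t₀ t) := by
  refine continuousOn_const.add (continuousOn_const.mul ?_)
  have hint : IntegrableOn (fun s => f s * v s ^ β) (uIcc t₀ t) := by
    rw [uIcc_of_le ht]; exact (hg.mono Icc_subset_Ici_self).integrableOn_Icc
  simpa only [uIcc_of_le ht] using intervalIntegral.continuousOn_primitive_interval hint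

theorem hasDerivAt_integralRhs (hg : ContinuousOn (fun s => f s * v s ^ β) (Ici t₀))
    (ht : t₀ < t) : HasDerivAt (integralRhs t₀ k β f v) (k * (f t * v t ^ β)) t :=
  ((intervalIntegral.integral_hasDerivAt_right
    (hg.mono (uIcc_of_le ht.le ▸ Icc_subset_Ici_self)).intervalIntegrable
    ((hg.mono Ioi_subset_Ici_self).stronglyMeasurableAtFilter isOpen_Ioi t ht)
    (hg.continuousAt (Ici_mem_nhds ht))).const_mul k).const_add k

end integralRhs

structure IsIntegralSupersolution (t₀ k β₁ β₂ : ℝ) (f₁ f₂ v₁ v₂ : ℝ → ℝ) : Prop where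
  continuousOn₁ : ContinuousOn v₁ (Ici t₀)
  continuousOn₂ : ContinuousOn v₂ (Ici t₀)
  le₁ : ∀ t ≥ t₀, v₁ t ≥ integralRhs t₀ k β₁ f₁ v₂ t
  le₂ : ∀ t ≥ t₀, v₂ t ≥ integralRhs t₀ k β₂ f₂ v₁ t

namespace IsIntegralSupersolution

variable {t₀ k β₁ β₂ : ℝ} {f₁ f₂ v₁ v₂ : ℝ → ℝ}

theorem pos (h : IsIntegralSupersolution t₀ k β₁ β₂ f₁ f₂ v₁ v₂) (hk : 0 < k)
    (hf₁0 : ∀ t ≥ t₀, 0 ≤ f₁ t) (hf₂0 : ∀ t ≥ t₀, 0 ≤ f₂ t) :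
    ∀ t ≥ t₀, 0 < v₁ t ∧ 0 < v₂ t := by
  suffices hmin : ∀ t ≥ t₀, 0 < min (v₁ t) (v₂ t) from fun t ht => lt_min_iff.1 (hmin t ht)
  refine forall_pos_of_forall_Ico_pos (h.continuousOn₁.inf h.continuousOn₂)
    fun t ht hpos => ?_
  have h₁ : k ≤ v₁ t := (le_integralRhs hk.le ht fun s hs => mul_nonneg (hf₁0 s hs.1)
    (Real.rpow_nonneg (lt_min_iff.1 (hpos s hs)).2.le β₁)).trans (h.le₁ t ht)
  have h₂ : k ≤ v₂ t := (le_integralRhs hk.le ht fun s hs => mul_nonneg (hf₂0 s hs.1)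
    (Real.rpow_nonneg (lt_min_iff.1 (hpos s hs)).1.le β₂)).trans (h.le₂ t ht)
  exact lt_min (hk.trans_le h₁) (hk.trans_le h₂)

theorem integral_le {γ T : ℝ} {F : ℝ → ℝ}
    (h : IsIntegralSupersolution t₀ k β₁ β₂ f₁ f₂ v₁ v₂)
    (hk : 0 < k) (hβ₁ : 0 ≤ β₁) (hβ₂ : 0 ≤ β₂) (hγ : 1 < γ)
    (hf₁c : ContinuousOn f₁ (Ici t₀)) (hf₂c : ContinuousOn f₂ (Ici t₀))
    (hf₁0 : ∀ t ≥ t₀, 0 ≤ f₁ t) (hf₂0 : ∀ t ≥ t₀, 0 ≤ f₂ t) (hFc : ContinuousOn F (Ici t₀))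
    (hF : ∀ t ≥ t₀, ∀ a b : ℝ, 0 ≤ a → 0 ≤ b →
      F t * (a * b) ^ γ ≤ f₁ t * b ^ (β₁ + 1) + f₂ t * a ^ (β₂ + 1))
    (hT : t₀ ≤ T) :
    (γ - 1) * k * ∫ t in t₀..T, F t ≤ (k * k) ^ (1 - γ) := by
  set w₁ := integralRhs t₀ k β₁ f₁ v₂
  set w₂ := integralRhs t₀ k β₂ f₂ v₁
  have hv := h.pos hk hf₁0 hf₂0
  have hg₁c := hf₁c.mul (h.continuousOn₂.rpow_const fun _ _ => Or.inr hβ₁)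
  have hg₂c := hf₂c.mul (h.continuousOn₁.rpow_const fun _ _ => Or.inr hβ₂)
  have hw₁ : ∀ t ≥ t₀, k ≤ w₁ t := fun t ht => le_integralRhs hk.le ht fun s hs =>
    mul_nonneg (hf₁0 s hs.1) (Real.rpow_nonneg (hv s hs.1).2.le β₁)
  have hw₂ : ∀ t ≥ t₀, k ≤ w₂ t := fun t ht => le_integralRhs hk.le ht fun s hs =>
    mul_nonneg (hf₂0 s hs.1) (Real.rpow_nonneg (hv s hs.1).1.le β₂)
  have hgrowth : ∀ t ∈ Ioo t₀ T, k * F t * (w₁ t * w₂ t) ^ γ ≤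
      k * (f₁ t * v₂ t ^ β₁) * w₂ t + w₁ t * (k * (f₂ t * v₁ t ^ β₂)) := by
    intro t ht
    have hw₁t := hk.le.trans (hw₁ t ht.1.le)
    have hw₂t := hk.le.trans (hw₂ t ht.1.le)
    calc k * F t * (w₁ t * w₂ t) ^ γ
        ≤ k * (f₁ t * w₂ t ^ (β₁ + 1) + f₂ t * w₁ t ^ (β₂ + 1)) := by
          rw [mul_assoc]
          exact mul_le_mul_of_nonneg_left (hF t ht.1.le _ _ hw₁t hw₂t) hk.le
      _ ≤ k * (f₁ t * v₂ t ^ β₁ * w₂ t + f₂ t * v₁ t ^ β₂ * w₁ t) :=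
          mul_le_mul_of_nonneg_left (add_le_add
            (mul_rpow_add_one_le (hf₁0 t ht.1.le) hw₂t (h.le₂ t ht.1.le) hβ₁)
            (mul_rpow_add_one_le (hf₂0 t ht.1.le) hw₁t (h.le₁ t ht.1.le) hβ₂)) hk.le
      _ = _ := by ring
  have hmain := integral_le_of_mul_rpow_le_deriv (F := fun t => k * F t) hT hγ
    (u := fun t => w₁ t * w₂ t)
    ((continuousOn_integralRhs hg₁c hT).mul (continuousOn_integralRhs hg₂c hT))
    (fun t ht => mul_pos (hk.trans_le (hw₁ t ht.1)) (hk.trans_le (hw₂ t ht.1)))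
    (fun t ht => (hasDerivAt_integralRhs hg₁c ht.1).mul (hasDerivAt_integralRhs hg₂c ht.1))
    ((continuousOn_const.mul hFc).mono Icc_subset_Ici_self).integrableOn_Icc hgrowth
  simpa only [intervalIntegral.integral_const_mul, integralRhs_self, w₁, w₂, mul_assoc]
    using hmain

end IsIntegralSupersolution

/-- if `∫_{t₀}^∞ F = ∞`, where
`F = (f₁^{1/(β₁+1)} f₂^{1/(β₂+1)})^{(β₁+1)(β₂+1)/(β₁+β₂+2)}`, then there is no pair of
continuous functions `v₁, v₂ : [t₀,∞) → ℝ` with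
`vᵢ(t) ≥ k + k ∫_{t₀}^t fᵢ(s) v_j(s)^{βᵢ} ds` for all `t ≥ t₀`. -/
theorem ode_system_blowup
    (t₀ k β₁ β₂ : ℝ) (hk : 0 < k)
    (hβ₁ : 1 ≤ β₁) (hβ₂ : 1 ≤ β₂) (hββ : 1 < β₁ * β₂)
    (f₁ f₂ : ℝ → ℝ)
    (hf₁c : ContinuousOn f₁ (Set.Ici t₀)) (hf₂c : ContinuousOn f₂ (Set.Ici t₀))
    (hf₁0 : ∀ t ≥ t₀, 0 ≤ f₁ t) (hf₂0 : ∀ t ≥ t₀, 0 ≤ f₂ t)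
    (F : ℝ → ℝ)
    (hF : ∀ t ≥ t₀,
      F t = (f₁ t ^ (1 / (β₁ + 1)) * f₂ t ^ (1 / (β₂ + 1))) ^
        ((β₁ + 1) * (β₂ + 1) / (β₁ + β₂ + 2)))
    (hFint : ∫⁻ s in Set.Ici t₀, ENNReal.ofReal (F s) = ⊤) :
    ¬ ∃ v₁ v₂ : ℝ → ℝ,
      ContinuousOn v₁ (Set.Ici t₀) ∧ ContinuousOn v₂ (Set.Ici t₀) ∧
      (∀ t ≥ t₀, v₁ t ≥ k + k * ∫ s in t₀..t, f₁ s * v₂ s ^ β₁) ∧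
      (∀ t ≥ t₀, v₂ t ≥ k + k * ∫ s in t₀..t, f₂ s * v₁ s ^ β₂) := by
  rintro ⟨v₁, v₂, hv₁c, hv₂c, hv₁, hv₂⟩
  have hv : IsIntegralSupersolution t₀ k β₁ β₂ f₁ f₂ v₁ v₂ := ⟨hv₁c, hv₂c, hv₁, hv₂⟩
  set γ := (β₁ + 1) * (β₂ + 1) / (β₁ + β₂ + 2) with hγ
  have hγ1 : 1 < γ := by rw [hγ, one_lt_div (by linarith)]; nlinarith
  have hFc : ContinuousOn F (Ici t₀) := by
    refine ContinuousOn.congr ?_ hF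
    exact ((hf₁c.rpow_const fun _ _ => Or.inr (by positivity)).mul
      (hf₂c.rpow_const fun _ _ => Or.inr (by positivity))).rpow_const
      fun _ _ => Or.inr (by positivity)
  have hF0 : ∀ t ≥ t₀, 0 ≤ F t := fun t ht => by
    rw [hF t ht]
    exact Real.rpow_nonneg (mul_nonneg (Real.rpow_nonneg (hf₁0 t ht) _)
      (Real.rpow_nonneg (hf₂0 t ht) _)) _
  have hFmean : ∀ t ≥ t₀, ∀ a b : ℝ, 0 ≤ a → 0 ≤ b →
      F t * (a * b) ^ γ ≤ f₁ t * b ^ (β₁ + 1) + f₂ t * a ^ (β₂ + 1) := by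
    intro t ht a b ha hb
    rw [hF t ht, hγ, show β₁ + β₂ + 2 = (β₁ + 1) + (β₂ + 1) by ring]
    exact rpow_mul_rpow_mul_le_add (by linarith) (by linarith) (hf₁0 t ht) (hf₂0 t ht) ha hb
  refine lintegral_ofReal_Ici_ne_top_of_intervalIntegral_le hFc hF0
    (M := (k * k) ^ (1 - γ) / ((γ - 1) * k)) (fun T hT => ?_) hFint
  rw [le_div_iff₀ (mul_pos (by linarith) hk), mul_comm]
  exact hv.integral_le hk (by linarith) (by linarith) hγ1 hf₁c hf₂c hf₁0 hf₂0 hFc hFmean hT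
end

section
/- Let t₀ ∈ ℝ, k > 0, β₁, β₂ ≥ 1, and let f₁, f₂ : [t₀,∞) → [0,∞) be continuous. Let v₁, v₂ : [t₀,∞) → ℝ be continuous functions satisfying v_i(t) ≥ k + k ∫_{t₀}^{t} f_i(s) v_j(s)^{β_i} ds for all t ≥ t₀, i ∈ {1,2}, j = 3−i. Let T ∈ (t₀,∞] and let z₁, z₂ : [t₀,T) → ℝ be continuous functions satisfying z_i(t) = k/2 + k ∫_{t₀}^{t} f_i(s) z_j(s)^{β_i} ds for all t ∈ [t₀,T), i ∈ {1,2}, j = 3−i. Then z_i(t) ≤ v_i(t) for all t ∈ [t₀,T) and i ∈ {1,2}. -/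
open MeasureTheory

lemma ode_comparison_aux (t₀ m k β : ℝ) (hk : 0 < k) (hβ : 1 ≤ β) (ht₀m : t₀ ≤ m)
    (f zo vo : ℝ → ℝ) (hf0 : ∀ t ≥ t₀, 0 ≤ f t)
    (hfc : ContinuousOn f (Set.Icc t₀ m))
    (hzoc : ContinuousOn zo (Set.Icc t₀ m)) (hvoc : ContinuousOn vo (Set.Icc t₀ m))
    (hIco : ∀ s ∈ Set.Ico t₀ m, 0 ≤ zo s ∧ zo s ≤ vo s)
    (zm vm : ℝ)
    (hzm : zm = k / 2 + k * ∫ s in t₀..m, f s * zo s ^ β)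
    (hvm : vm ≥ k + k * ∫ s in t₀..m, f s * vo s ^ β) :
    0 < zm ∧ zm < vm := by
  have hβ0 : (0:ℝ) ≤ β := le_trans zero_le_one hβ
  have hintz : IntervalIntegrable (fun s => f s * zo s ^ β) volume t₀ m :=
    (hfc.mul (hzoc.rpow_const (fun x _ => Or.inr hβ0))).intervalIntegrable_of_Icc ht₀m
  have hintv : IntervalIntegrable (fun s => f s * vo s ^ β) volume t₀ m :=
    (hfc.mul (hvoc.rpow_const (fun x _ => Or.inr hβ0))).intervalIntegrable_of_Icc ht₀m
  have hres : volume.restrict (Set.Icc t₀ m) = volume.restrict (Set.Ico t₀ m) :=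
    (Measure.restrict_congr_set Ico_ae_eq_Icc).symm
  have hae : (fun s => f s * zo s ^ β) ≤ᶠ[ae (volume.restrict (Set.Icc t₀ m))]
      fun s => f s * vo s ^ β := by
    rw [hres]
    refine (ae_restrict_iff' measurableSet_Ico).2 (ae_of_all _ fun s hs => ?_)
    obtain ⟨h0, h1⟩ := hIco s hs
    exact mul_le_mul_of_nonneg_left (Real.rpow_le_rpow h0 h1 hβ0) (hf0 s hs.1)
  have hae0 : (0 : ℝ → ℝ) ≤ᶠ[ae (volume.restrict (Set.Icc t₀ m))]
      fun s => f s * zo s ^ β := by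
    rw [hres]
    refine (ae_restrict_iff' measurableSet_Ico).2 (ae_of_all _ fun s hs => ?_)
    obtain ⟨h0, _⟩ := hIco s hs
    exact mul_nonneg (hf0 s hs.1) (Real.rpow_nonneg h0 β)
  have hI0 : 0 ≤ ∫ s in t₀..m, f s * zo s ^ β :=
    intervalIntegral.integral_nonneg_of_ae_restrict ht₀m hae0
  have hIle : (∫ s in t₀..m, f s * zo s ^ β) ≤ ∫ s in t₀..m, f s * vo s ^ β :=
    intervalIntegral.integral_mono_ae_restrict ht₀m hintz hintv hae
  constructor
  · nlinarith
  · nlinarith [mul_le_mul_of_nonneg_left hIle hk.le]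

/-- comparison between supersolutions `vᵢ` of the integral inequalities
(with constant `k`) and solutions `zᵢ` of the integral equations (with constant `k/2`),
on `[t₀, T)` where `T ∈ (t₀, ∞]`. -/
theorem ode_system_comparison
    (t₀ k β₁ β₂ : ℝ) (hk : 0 < k) (hβ₁ : 1 ≤ β₁) (hβ₂ : 1 ≤ β₂)
    (f₁ f₂ : ℝ → ℝ)
    (hf₁c : ContinuousOn f₁ (Set.Ici t₀)) (hf₂c : ContinuousOn f₂ (Set.Ici t₀))
    (hf₁0 : ∀ t ≥ t₀, 0 ≤ f₁ t) (hf₂0 : ∀ t ≥ t₀, 0 ≤ f₂ t)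
    (v₁ v₂ : ℝ → ℝ)
    (hv₁c : ContinuousOn v₁ (Set.Ici t₀)) (hv₂c : ContinuousOn v₂ (Set.Ici t₀))
    (hv₁ : ∀ t ≥ t₀, v₁ t ≥ k + k * ∫ s in t₀..t, f₁ s * v₂ s ^ β₁)
    (hv₂ : ∀ t ≥ t₀, v₂ t ≥ k + k * ∫ s in t₀..t, f₂ s * v₁ s ^ β₂)
    (T : EReal) (hT : (t₀ : EReal) < T)
    (z₁ z₂ : ℝ → ℝ)
    (hz₁c : ContinuousOn z₁ {t : ℝ | t₀ ≤ t ∧ (t : EReal) < T})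
    (hz₂c : ContinuousOn z₂ {t : ℝ | t₀ ≤ t ∧ (t : EReal) < T})
    (hz₁ : ∀ t : ℝ, t₀ ≤ t → (t : EReal) < T →
      z₁ t = k / 2 + k * ∫ s in t₀..t, f₁ s * z₂ s ^ β₁)
    (hz₂ : ∀ t : ℝ, t₀ ≤ t → (t : EReal) < T →
      z₂ t = k / 2 + k * ∫ s in t₀..t, f₂ s * z₁ s ^ β₂) :
    ∀ t : ℝ, t₀ ≤ t → (t : EReal) < T → z₁ t ≤ v₁ t ∧ z₂ t ≤ v₂ t := by
  set D : Set ℝ := {t : ℝ | t₀ ≤ t ∧ (t : EReal) < T} with hD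
  set P : ℝ → Prop := fun t => 0 ≤ z₁ t ∧ z₁ t ≤ v₁ t ∧ 0 ≤ z₂ t ∧ z₂ t ≤ v₂ t with hP
  suffices h : ∀ t : ℝ, t₀ ≤ t → (t : EReal) < T → P t by
    intro t ht htT
    exact ⟨(h t ht htT).2.1, (h t ht htT).2.2.2⟩
  by_contra hc
  push_neg at hc
  obtain ⟨t₁, ht₁₀, ht₁T, hP₁⟩ := hc
  set S : Set ℝ := {t | t₀ ≤ t ∧ (t : EReal) < T ∧ ¬ P t} with hS
  have hSne : S.Nonempty := ⟨t₁, ht₁₀, ht₁T, hP₁⟩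
  have hSbdd : BddBelow S := ⟨t₀, fun s hs => hs.1⟩
  set m := sInf S with hm
  have ht₀m : t₀ ≤ m := le_csInf hSne fun s hs => hs.1
  have hmt₁ : m ≤ t₁ := csInf_le hSbdd ⟨ht₁₀, ht₁T, hP₁⟩
  have hmT : (m : EReal) < T := lt_of_le_of_lt (EReal.coe_le_coe_iff.2 hmt₁) ht₁T
  have hmD : m ∈ D := ⟨ht₀m, hmT⟩
  -- points strictly below m satisfy P
  have hIco : ∀ s ∈ Set.Ico t₀ m, P s := by
    intro s hs
    by_contra hPs
    have hsT : (s : EReal) < T := lt_trans (EReal.coe_lt_coe_iff.2 hs.2) hmT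
    exact absurd (csInf_le hSbdd ⟨hs.1, hsT, hPs⟩) (not_le.2 hs.2)
  have hsubD : Set.Icc t₀ m ⊆ D := fun s hs =>
    ⟨hs.1, lt_of_le_of_lt (EReal.coe_le_coe_iff.2 hs.2) hmT⟩
  have hsubI : Set.Icc t₀ m ⊆ Set.Ici t₀ := Set.Icc_subset_Ici_self
  -- strict bounds at m
  have hkey₁ : 0 < z₁ m ∧ z₁ m < v₁ m := by
    refine ode_comparison_aux t₀ m k β₁ hk hβ₁ ht₀m f₁ z₂ v₂ hf₁0 (hf₁c.mono hsubI)
      (hz₂c.mono hsubD) (hv₂c.mono hsubI) (fun s hs => ⟨(hIco s hs).2.2.1, (hIco s hs).2.2.2⟩)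
      (z₁ m) (v₁ m) (hz₁ m ht₀m hmT) (hv₁ m ht₀m)
  have hkey₂ : 0 < z₂ m ∧ z₂ m < v₂ m := by
    refine ode_comparison_aux t₀ m k β₂ hk hβ₂ ht₀m f₂ z₁ v₁ hf₂0 (hf₂c.mono hsubI)
      (hz₁c.mono hsubD) (hv₁c.mono hsubI) (fun s hs => ⟨(hIco s hs).1, (hIco s hs).2.1⟩)
      (z₂ m) (v₂ m) (hz₂ m ht₀m hmT) (hv₂ m ht₀m)
  -- pick u : ℝ with m < u and u < T
  obtain ⟨u, hmu, huT⟩ := EReal.exists_between_coe_real hmT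
  have hmu' : m < u := EReal.coe_lt_coe_iff.1 hmu
  have hsubDu : Set.Icc m u ⊆ D := fun s hs =>
    ⟨le_trans ht₀m hs.1, lt_of_le_of_lt (EReal.coe_le_coe_iff.2 hs.2) huT⟩
  -- strict inequalities persist near m within Icc m u
  have hcont : ∀ (g : ℝ → ℝ), ContinuousOn g D → 0 < g m →
      ∀ᶠ t in nhdsWithin m (Set.Icc m u), 0 < g t := by
    intro g hg h0
    have : ContinuousWithinAt g (Set.Icc m u) m := (hg m hmD).mono hsubDu
    exact this.eventually_const_lt h0
  have h1 : ∀ᶠ t in nhdsWithin m (Set.Icc m u), 0 < z₁ t :=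
    hcont z₁ hz₁c hkey₁.1
  have h2 : ∀ᶠ t in nhdsWithin m (Set.Icc m u), 0 < v₁ t - z₁ t := by
    refine hcont (fun t => v₁ t - z₁ t) ?_ (sub_pos.2 hkey₁.2)
    exact fun t ht => ((hv₁c t ht.1).mono (fun s hs => hs.1)).sub (hz₁c t ht)
  have h3 : ∀ᶠ t in nhdsWithin m (Set.Icc m u), 0 < z₂ t :=
    hcont z₂ hz₂c hkey₂.1
  have h4 : ∀ᶠ t in nhdsWithin m (Set.Icc m u), 0 < v₂ t - z₂ t := by
    refine hcont (fun t => v₂ t - z₂ t) ?_ (sub_pos.2 hkey₂.2)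
    exact fun t ht => ((hv₂c t ht.1).mono (fun s hs => hs.1)).sub (hz₂c t ht)
  have hall : ∀ᶠ t in nhdsWithin m (Set.Icc m u), P t := by
    filter_upwards [h1, h2, h3, h4] with t a1 a2 a3 a4
    exact ⟨a1.le, by linarith, a3.le, by linarith⟩
  rw [Filter.eventually_iff, Metric.mem_nhdsWithin_iff] at hall
  obtain ⟨ε, hε, hball⟩ := hall
  set δ := min (ε / 2) (u - m) with hδ
  have hδ0 : 0 < δ := lt_min (by linarith) (by linarith)
  have hlb : m + δ ≤ m := by
    rw [hm]
    refine le_csInf hSne fun s hs => ?_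
    by_contra hlt
    push_neg at hlt
    have hms : m ≤ s := csInf_le hSbdd hs
    have hsu : s ≤ u := by
      have : δ ≤ u - m := min_le_right _ _
      linarith
    have hdist : dist s m < ε := by
      rw [Real.dist_eq, abs_of_nonneg (by linarith)]
      have : δ ≤ ε / 2 := min_le_left _ _
      linarith
    exact hs.2.2 (hball ⟨Metric.mem_ball.2 hdist, hms, hsu⟩)
  linarith
end
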